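/- Let $W \subset V$ be finite-dimensional real vector spaces of smooth vector fields on a manifold $N$ with $[W,W] \subset W$ and $[W,V] \subset V$ (a quasi-Lie scheme). Let $Y$ be a complete vector field in $W$ with flow $\phi_s$, and let $X \in V$. Then $(\phi_s)_* X \in V$ for all $s \in \mathbb{R}$. -/

import Mathlib

/-- Lie bracket of vector fields on a normed space. -/
noncomputable def vbr {E : Type*} [NormedAddCommGroup E] [NormedSpace ℝ E]
    (U V : E → E) : E → E :=
  fun p => fderiv ℝ V p (U p) - fderiv ℝ U p (V p)

set_option maxHeartbeats 1000000 in
/-- Main property of a quasi-Lie scheme `(W,V)`: the flow of a complete vector field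
`Y ∈ W` pushes every `X ∈ V` to a vector field in `V`. -/
theorem stmt19 {E : Type*} [NormedAddCommGroup E] [NormedSpace ℝ E]
    (W V : Submodule ℝ (E → E)) (hWV : W ≤ V)
    (hWfd : FiniteDimensional ℝ W) (hVfd : FiniteDimensional ℝ V)
    (hsmooth : ∀ f ∈ V, ContDiff ℝ (⊤ : ℕ∞) f)
    (hWW : ∀ f ∈ W, ∀ g ∈ W, vbr f g ∈ W)
    (hWVbr : ∀ f ∈ W, ∀ g ∈ V, vbr f g ∈ V)
    (Y : E → E) (hY : Y ∈ W) (X : E → E) (hX : X ∈ V)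
    (φ : ℝ → E → E) (hφ0 : φ 0 = id)
    (hgrp : ∀ (a b : ℝ) (x : E), φ (a + b) x = φ a (φ b x))
    (hflow : ∀ (r : ℝ) (x : E), HasDerivAt (fun q => φ q x) (Y (φ r x)) r)
    (hφsm : ContDiff ℝ (⊤ : ℕ∞) (fun p : ℝ × E => φ p.1 p.2)) :
    ∀ r : ℝ, (fun x => fderiv ℝ (φ r) (φ (-r) x) (X (φ (-r) x))) ∈ V := by
  classical
  intro r
  -- differentiability of elements of `V`
  have hV1 : ∀ v : V, Differentiable ℝ (v : E → E) := fun v =>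
    (hsmooth _ v.2).differentiable (by simp)
  have hYd : Differentiable ℝ Y := (hsmooth Y (hWV hY)).differentiable (by simp)
  -- the linear operator `A : V → V`, `A v = DY·v - Dv·Y`
  have hAmem : ∀ v : V, (fun p => fderiv ℝ Y p ((v : E → E) p)
      - fderiv ℝ (v : E → E) p (Y p)) ∈ V := by
    intro v
    have h := V.neg_mem (hWVbr Y hY (v : E → E) v.2)
    have heq : -(vbr Y (v : E → E)) = fun p => fderiv ℝ Y p ((v : E → E) p)
        - fderiv ℝ (v : E → E) p (Y p) := by
      funext p; simp [vbr, neg_sub]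
    rwa [heq] at h
  let A : V →ₗ[ℝ] V :=
  { toFun := fun v => ⟨_, hAmem v⟩
    map_add' := by
      intro v w
      apply Subtype.ext
      funext p
      have hv : DifferentiableAt ℝ (v : E → E) p := (hV1 v).differentiableAt
      have hw : DifferentiableAt ℝ (w : E → E) p := (hV1 w).differentiableAt
      show fderiv ℝ Y p (((v : E → E) + (w : E → E)) p)
          - fderiv ℝ ((v : E → E) + (w : E → E)) p (Y p)
        = (fderiv ℝ Y p ((v : E → E) p) - fderiv ℝ (v : E → E) p (Y p))
          + (fderiv ℝ Y p ((w : E → E) p) - fderiv ℝ (w : E → E) p (Y p))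
      rw [fderiv_add hv hw]
      simp only [Pi.add_apply, map_add, ContinuousLinearMap.add_apply]
      abel
    map_smul' := by
      intro c v
      apply Subtype.ext
      funext p
      have hv : DifferentiableAt ℝ (v : E → E) p := (hV1 v).differentiableAt
      show fderiv ℝ Y p ((c • (v : E → E)) p) - fderiv ℝ (c • (v : E → E)) p (Y p)
        = c • (fderiv ℝ Y p ((v : E → E) p) - fderiv ℝ (v : E → E) p (Y p))
      rw [fderiv_const_smul hv c]
      simp only [Pi.smul_apply, map_smul, ContinuousLinearMap.smul_apply, smul_sub] }
  have hAapp : ∀ (v : V) (p : E), ((A v : V) : E → E) p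
      = fderiv ℝ Y p ((v : E → E) p) - fderiv ℝ (v : E → E) p (Y p) := fun v p => rfl
  -- finite-dimensional set-up
  set m := Module.finrank ℝ V with hmdef
  let b : Module.Basis (Fin m) ℝ V := Module.finBasis ℝ V
  let e : V ≃ₗ[ℝ] (Fin m → ℝ) := b.equivFun
  let M : (Fin m → ℝ) →L[ℝ] (Fin m → ℝ) :=
    LinearMap.toContinuousLinearMap ((e.toLinearMap ∘ₗ (A : V →ₗ[ℝ] V)) ∘ₗ e.symm.toLinearMap)
  have hM : ∀ c : Fin m → ℝ, e.symm (M c) = A (e.symm c) := by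
    intro c
    have : M c = e (A (e.symm c)) := by
      show (LinearMap.toContinuousLinearMap ((e.toLinearMap ∘ₗ (A : V →ₗ[ℝ] V)) ∘ₗ e.symm.toLinearMap)) c
        = e (A (e.symm c))
      rw [LinearMap.coe_toContinuousLinearMap']
      rfl
    rw [this, LinearEquiv.symm_apply_apply]
  let γ : ℝ → (Fin m → ℝ) := fun t => NormedSpace.exp (t • M) (e ⟨X, hX⟩)
  have hγ : ∀ t, HasDerivAt γ (M (γ t)) t := by
    intro t
    have h1 : HasDerivAt (fun u : ℝ => NormedSpace.exp (u • M))
        (M * NormedSpace.exp (t • M)) t := hasDerivAt_exp_smul_const' M t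
    have h2 := h1.clm_apply (hasDerivAt_const t (e ⟨X, hX⟩))
    have h3 : HasDerivAt (fun u : ℝ => NormedSpace.exp (u • M) (e ⟨X, hX⟩))
        (M (NormedSpace.exp (t • M) (e ⟨X, hX⟩))) t := by
      simpa using h2
    exact h3
  have hγ0 : γ 0 = e ⟨X, hX⟩ := by
    show NormedSpace.exp ((0:ℝ) • M) (e ⟨X, hX⟩) = e ⟨X, hX⟩
    simp [NormedSpace.exp_zero]
  -- coordinate representation lemmas
  have hfi : ∀ i, Differentiable ℝ ((b i : V) : E → E) := fun i => hV1 (b i)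
  have hF1 : ∀ (c : Fin m → ℝ) (p : E),
      ((e.symm c : V) : E → E) p = ∑ i, c i • ((b i : V) : E → E) p := by
    intro c p
    have h1 : (e.symm c : V) = ∑ i, c i • b i := b.equivFun_symm_apply c
    rw [h1]
    rw [AddSubmonoidClass.coe_finset_sum]
    rw [Finset.sum_apply]
    refine Finset.sum_congr rfl fun i _ => ?_
    rfl
  have hF2 : ∀ (c : Fin m → ℝ) (p : E) (w : E),
      fderiv ℝ ((e.symm c : V) : E → E) p w
        = ∑ i, c i • fderiv ℝ ((b i : V) : E → E) p w := by
    intro c p w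
    have hfun : ((e.symm c : V) : E → E) = fun q => ∑ i, c i • ((b i : V) : E → E) q :=
      funext fun q => hF1 c q
    rw [hfun, fderiv_fun_sum (A := fun i q => c i • ((b i : V) : E → E) q) (fun i _ => ((hfi i).differentiableAt).const_smul (c i))]
    simp only [ContinuousLinearMap.coe_sum', Finset.sum_apply]
    refine Finset.sum_congr rfl fun i _ => ?_
    rw [fderiv_fun_const_smul (hfi i).differentiableAt (c i)]
    rfl
  -- the flow machinery
  set Φ : ℝ × E → E := fun p => φ p.1 p.2 with hΦdef
  have hΦd : Differentiable ℝ Φ := hφsm.differentiable (by simp)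
  set D : ℝ × E → (ℝ × E) →L[ℝ] E := fderiv ℝ Φ with hDdef
  have hDc : ContDiff ℝ (⊤ : ℕ∞) D := hφsm.fderiv_right (by simp)
  have hDd : Differentiable ℝ D := hDc.differentiable (by simp)
  set D2 : ℝ × E → (ℝ × E) →L[ℝ] (ℝ × E) →L[ℝ] E := fderiv ℝ D with hD2def
  have hΦD : ∀ q, HasFDerivAt Φ (D q) q := fun q => (hΦd q).hasFDerivAt
  have hD2 : ∀ q, HasFDerivAt D (D2 q) q := fun q => (hDd q).hasFDerivAt
  have hsymm : ∀ q w₁ w₂, D2 q w₁ w₂ = D2 q w₂ w₁ := fun q =>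
    second_derivative_symmetric hΦD (hD2 q)
  have hφsd : ∀ s : ℝ, Differentiable ℝ (φ s) := by
    intro s
    have : ContDiff ℝ (⊤ : ℕ∞) (fun p : E => Φ (s, p)) :=
      hφsm.comp (contDiff_const.prodMk contDiff_id)
    exact this.differentiable (by simp)
  set ι : E →L[ℝ] ℝ × E := (0 : E →L[ℝ] ℝ).prod (ContinuousLinearMap.id ℝ E) with hιdef
  have hιapp : ∀ v : E, ι v = (0, v) := fun v => rfl
  have hpartp : ∀ (s : ℝ) (p : E), HasFDerivAt (φ s) ((D (s, p)).comp ι) p := by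
    intro s p
    have h1 : HasFDerivAt (fun p : E => ((s : ℝ), p)) ι p :=
      (hasFDerivAt_const s p).prodMk (hasFDerivAt_id p)
    exact (hΦD (s, p)).comp p h1
  have hfderivφ : ∀ (s : ℝ) (p : E) (v : E), fderiv ℝ (φ s) p v = D (s, p) (0, v) := by
    intro s p v
    rw [(hpartp s p).fderiv]
    rfl
  have hparts : ∀ q : ℝ × E, D q ((1 : ℝ), (0 : E)) = Y (Φ q) := by
    rintro ⟨s, p⟩
    have hc : HasDerivAt (fun q : ℝ => ((q : ℝ), p)) ((1 : ℝ), (0 : E)) s :=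
      (hasDerivAt_id s).prodMk (hasDerivAt_const s p)
    have h1 : HasDerivAt (fun q : ℝ => Φ (q, p)) (D (s, p) (1, 0)) s :=
      by have := (hΦD (s, p)).comp_hasDerivAt s hc; exact this
    exact h1.unique (hflow s p)
  have hpush : ∀ (s : ℝ) (p : E), fderiv ℝ (φ s) p (Y p) = Y (φ s p) := by
    intro s p
    have h0 : φ 0 p = p := congrFun hφ0 p
    have hin : HasDerivAt (fun t : ℝ => φ t p) (Y p) 0 := by
      have h := hflow 0 p; rwa [h0] at h
    have hl : HasFDerivAt (φ s) (fderiv ℝ (φ s) p) ((fun t : ℝ => φ t p) 0) := by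
      rw [show (fun t : ℝ => φ t p) 0 = p from h0]
      exact ((hφsd s) p).hasFDerivAt
    have h1 : HasDerivAt (fun t : ℝ => φ s (φ t p)) (fderiv ℝ (φ s) p (Y p)) 0 :=
      hl.comp_hasDerivAt 0 hin
    have h2 : HasDerivAt (fun t : ℝ => φ s (φ t p)) (Y (φ s p)) 0 := by
      have heq : (fun t : ℝ => φ s (φ t p)) = fun t : ℝ => φ (s + t) p := by
        funext t; rw [← hgrp]
      rw [heq]
      have hadd : HasDerivAt (fun t : ℝ => s + t) (1 : ℝ) 0 := by
        simpa using (hasDerivAt_id (0 : ℝ)).const_add s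
      have hout : HasDerivAt (fun q : ℝ => φ q p) (Y (φ (s + 0) p)) (s + 0) := hflow (s + 0) p
      have h3 : HasDerivAt ((fun q : ℝ => φ q p) ∘ fun t : ℝ => s + t)
          ((1 : ℝ) • Y (φ (s + 0) p)) 0 := hout.scomp_of_eq 0 hadd rfl
      simpa [Function.comp_def] using h3
    exact h1.unique h2
  have hYpush : ∀ q : ℝ × E, D q ((0 : ℝ), Y q.2) = Y (Φ q) := by
    rintro ⟨s, p⟩
    rw [← hfderivφ s p (Y p)]
    exact hpush s p
  -- the key cancellation lemma
  have hkey : ∀ (q : ℝ × E) (z : E),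
      D2 q ((1 : ℝ), -Y q.2) ((0 : ℝ), z) = D q ((0 : ℝ), fderiv ℝ Y q.2 z) := by
    intro q z
    have hu' : HasFDerivAt (fun w : ℝ × E => (((0 : ℝ)), Y w.2))
        ((0 : (ℝ × E) →L[ℝ] ℝ).prod
          ((fderiv ℝ Y q.2).comp (ContinuousLinearMap.snd ℝ ℝ E))) q :=
      (hasFDerivAt_const (0 : ℝ) q).prodMk (((hYd q.2).hasFDerivAt).comp q hasFDerivAt_snd)
    have h1 : HasFDerivAt (fun w : ℝ × E => D w ((1 : ℝ), (0 : E)))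
        ((D q).comp 0 + (D2 q).flip ((1 : ℝ), (0 : E))) q :=
      (hD2 q).clm_apply (hasFDerivAt_const ((1 : ℝ), (0 : E)) q)
    have h2 : HasFDerivAt (fun w : ℝ × E => D w ((0 : ℝ), Y w.2))
        ((D q).comp ((0 : (ℝ × E) →L[ℝ] ℝ).prod
            ((fderiv ℝ Y q.2).comp (ContinuousLinearMap.snd ℝ ℝ E)))
          + (D2 q).flip ((0 : ℝ), Y q.2)) q :=
      (hD2 q).clm_apply hu'
    have h3 : HasFDerivAt (fun w : ℝ × E => D w ((1 : ℝ), (0 : E)) - D w ((0 : ℝ), Y w.2)) _ q :=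
      h1.sub h2
    have hzero : (fun w : ℝ × E => D w ((1 : ℝ), (0 : E)) - D w ((0 : ℝ), Y w.2))
        = fun _ => (0 : E) := by
      funext w
      rw [hparts w, hYpush w, sub_self]
    rw [hzero] at h3
    have heq := h3.unique (hasFDerivAt_const (0 : E) q)
    have happ := congrArg (fun T : (ℝ × E) →L[ℝ] E => T ((0 : ℝ), z)) heq
    simp only [ContinuousLinearMap.sub_apply, ContinuousLinearMap.add_apply,
      ContinuousLinearMap.comp_apply, ContinuousLinearMap.flip_apply,
      ContinuousLinearMap.zero_apply, ContinuousLinearMap.prod_apply,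
      ContinuousLinearMap.coe_snd', ContinuousLinearMap.comp_zero] at happ
    -- happ : D2 q (0,z) (1,0) - (D q (0, DY z) + D2 q (0,z) (0, Y q.2)) = 0
    have hsplit : ((1 : ℝ), -Y q.2) = ((1 : ℝ), (0 : E)) - ((0 : ℝ), Y q.2) := by
      simp [Prod.ext_iff]
    rw [hsymm q ((1 : ℝ), -Y q.2) ((0 : ℝ), z), hsplit, map_sub]
    have happ' : D2 q ((0 : ℝ), z) ((1 : ℝ), (0 : E))
        = D q ((0 : ℝ), fderiv ℝ Y q.2 z) + D2 q ((0 : ℝ), z) ((0 : ℝ), Y q.2) := by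
      rw [← sub_eq_zero]
      convert happ using 1
      abel
    rw [happ']
    abel
  -- the evaluation function ψ and its constancy
  have hfinal : (fun x => fderiv ℝ (φ r) (φ (-r) x) (X (φ (-r) x)))
      = ((e.symm (γ r) : V) : E → E) := by
    funext x
    set y : ℝ → E := fun s => φ (-s) x with hydef
    have hyd : ∀ s, HasDerivAt y (-Y (y s)) s := by
      intro s
      have h1 := (hflow (-s) x).scomp_of_eq s (hasDerivAt_neg' (x := s)) rfl
      simpa [Function.comp_def] using h1
    set ψ : ℝ → E := fun s => D (s, y s) ((0 : ℝ), ((e.symm (γ (r - s)) : V) : E → E) (y s))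
      with hψdef
    have hψd : ∀ s, HasDerivAt ψ 0 s := by
      intro s
      have hu : HasDerivAt (fun s : ℝ => ((s : ℝ), y s)) ((1 : ℝ), -Y (y s)) s :=
        (hasDerivAt_id s).prodMk (hyd s)
      have hT0 : HasDerivAt (fun s : ℝ => D (s, y s)) (D2 (s, y s) (1, -Y (y s))) s :=
        (hD2 (s, y s)).comp_hasDerivAt s hu
      have hT : HasDerivAt (fun s : ℝ => (D (s, y s)).comp ι)
          ((D2 (s, y s) (1, -Y (y s))).comp ι) s := by
        have h4 : HasDerivAt (fun u : ℝ =>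
              (ContinuousLinearMap.compL ℝ E (ℝ × E) E).flip ι (D (u, y u)))
            ((ContinuousLinearMap.compL ℝ E (ℝ × E) E).flip ι (D2 (s, y s) (1, -Y (y s)))) s :=
          ((ContinuousLinearMap.compL ℝ E (ℝ × E) E).flip ι).hasFDerivAt.comp_hasDerivAt s hT0
        simp only [ContinuousLinearMap.flip_apply, ContinuousLinearMap.compL_apply] at h4
        exact h4
      -- derivative of the vector part
      have hγs : HasDerivAt (fun u : ℝ => γ (r - u)) (-(M (γ (r - s)))) s := by
        have h1 := (hγ (r - s)).scomp_of_eq s ((hasDerivAt_id s).const_sub r) rfl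
        simpa [Function.comp_def] using h1
      have hterm : ∀ i : Fin m,
          HasDerivAt (fun u : ℝ => γ (r - u) i • ((b i : V) : E → E) (y u))
            (γ (r - s) i • fderiv ℝ ((b i : V) : E → E) (y s) (-Y (y s))
              + (-(M (γ (r - s)))) i • ((b i : V) : E → E) (y s)) s := by
        intro i
        have hci : HasDerivAt (fun u : ℝ => γ (r - u) i) ((-(M (γ (r - s)))) i) s :=
          ((ContinuousLinearMap.proj (R := ℝ) (φ := fun _ : Fin m => ℝ) i).hasFDerivAt).comp_hasDerivAt s hγs
        have hfi' : HasDerivAt (fun u : ℝ => ((b i : V) : E → E) (y u))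
            (fderiv ℝ ((b i : V) : E → E) (y s) (-Y (y s))) s :=
          ((hfi i (y s)).hasFDerivAt).comp_hasDerivAt s (hyd s)
        exact hci.smul hfi'
      have hsum := HasDerivAt.fun_sum (u := Finset.univ) (fun i _ => hterm i)
      have hrep : (fun u : ℝ => ((e.symm (γ (r - u)) : V) : E → E) (y u))
          = fun u : ℝ => ∑ i, γ (r - u) i • ((b i : V) : E → E) (y u) :=
        funext fun u => hF1 (γ (r - u)) (y u)
      have hvalz : (∑ i, (γ (r - s) i • fderiv ℝ ((b i : V) : E → E) (y s) (-Y (y s))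
            + (-(M (γ (r - s)))) i • ((b i : V) : E → E) (y s)))
          = -(fderiv ℝ Y (y s) (((e.symm (γ (r - s)) : V) : E → E) (y s))) := by
      -- compute
        rw [Finset.sum_add_distrib]
        have hS1 : (∑ i, (-(M (γ (r - s)))) i • ((b i : V) : E → E) (y s))
            = -(fderiv ℝ Y (y s) (((e.symm (γ (r - s)) : V) : E → E) (y s))
                - fderiv ℝ ((e.symm (γ (r - s)) : V) : E → E) (y s) (Y (y s))) := by
          have h5 : (∑ i, (-(M (γ (r - s)))) i • ((b i : V) : E → E) (y s))
              = -∑ i, (M (γ (r - s))) i • ((b i : V) : E → E) (y s) := by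
            rw [← Finset.sum_neg_distrib]
            refine Finset.sum_congr rfl fun i _ => ?_
            simp [neg_smul]
          rw [h5, ← hF1 (M (γ (r - s))) (y s), hM (γ (r - s))]
          rw [hAapp (e.symm (γ (r - s))) (y s)]
        have hS2 : (∑ i, γ (r - s) i • fderiv ℝ ((b i : V) : E → E) (y s) (-Y (y s)))
            = -(fderiv ℝ ((e.symm (γ (r - s)) : V) : E → E) (y s) (Y (y s))) := by
          have h6 : (∑ i, γ (r - s) i • fderiv ℝ ((b i : V) : E → E) (y s) (-Y (y s)))
              = -∑ i, γ (r - s) i • fderiv ℝ ((b i : V) : E → E) (y s) (Y (y s)) := by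
            rw [← Finset.sum_neg_distrib]
            refine Finset.sum_congr rfl fun i _ => ?_
            rw [map_neg, smul_neg]
          rw [h6, ← hF2 (γ (r - s)) (y s) (Y (y s))]
        rw [hS1, hS2]
        abel
      have hz : HasDerivAt (fun u : ℝ => ((e.symm (γ (r - u)) : V) : E → E) (y u))
          (-(fderiv ℝ Y (y s) (((e.symm (γ (r - s)) : V) : E → E) (y s)))) s := by
        rw [hrep, ← hvalz]
        exact hsum
      have hmain := hT.clm_apply hz
      have hval : (D2 (s, y s) (1, -Y (y s))).comp ι
            (((e.symm (γ (r - s)) : V) : E → E) (y s))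
          + (D (s, y s)).comp ι
            (-(fderiv ℝ Y (y s) (((e.symm (γ (r - s)) : V) : E → E) (y s)))) = 0 := by
        have hk := hkey (s, y s) (((e.symm (γ (r - s)) : V) : E → E) (y s))
        simp only [ContinuousLinearMap.comp_apply, hιapp, map_neg]
        rw [hk]
        simp
      have hmain' : HasDerivAt
          (fun u : ℝ => (D (u, y u)).comp ι (((e.symm (γ (r - u)) : V) : E → E) (y u))) 0 s := by
        rw [← hval]; exact hmain
      exact hmain'
    have hcon : ψ r = ψ 0 :=
      is_const_of_deriv_eq_zero (fun s => (hψd s).differentiableAt)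
        (fun s => (hψd s).deriv) r 0
    have hγrr : e.symm (γ (r - r)) = (⟨X, hX⟩ : V) := by
      rw [sub_self, hγ0, LinearEquiv.symm_apply_apply]
    have hψr : ψ r = fderiv ℝ (φ r) (φ (-r) x) (X (φ (-r) x)) := by
      show D (r, y r) ((0 : ℝ), ((e.symm (γ (r - r)) : V) : E → E) (y r)) = _
      rw [hγrr]
      exact (hfderivφ r (y r) (X (y r))).symm
    have hψ0 : ψ 0 = ((e.symm (γ r) : V) : E → E) x := by
      have hy0 : y 0 = x := by
        show φ (-(0 : ℝ)) x = x
        rw [neg_zero, hφ0]; rfl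
      show D (0, y 0) ((0 : ℝ), ((e.symm (γ (r - 0)) : V) : E → E) (y 0)) = _
      rw [hy0, sub_zero, ← hfderivφ 0 x (((e.symm (γ r) : V) : E → E) x), hφ0]
      simp
    rw [← hψr, hcon, hψ0]
  rw [hfinal]
  exact (e.symm (γ r) : V).2
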